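/- Let z ≥ 1 and p a partition, and let d_com^{(z)}(p) = Σ_i s(p_i; z) where s(m;z) = (z^a, b) for m = az + b with 0 ≤ b < z, and the sum is the componentwise partition sum. Then for every i ≥ 1, the i-th part of d_com^{(z)}(p) equals the total number of boxes of the Young diagram of p lying in columns z(i−1)+1 through zi; equivalently, (d_com^{(z)}(p))_i = Σ_{j=z(i−1)+1}^{zi} p^⊤_j, where p^⊤ is the conjugate partition. -/

import Mathlib

namespace PartStmt

/-- Sorted (nonincreasing) list of parts of a partition, represented as a multiset. -/
def parts (m : Multiset ℕ) : List ℕ := (m.sort (· ≤ ·)).reverse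

/-- The `i`-th part (0-indexed), with `0` beyond the length. -/
def part (m : Multiset ℕ) (i : ℕ) : ℕ := (parts m).getD i 0

/-- Partial sum of the `k` largest parts. -/
def psum (m : Multiset ℕ) (k : ℕ) : ℕ := ∑ i ∈ Finset.range k, part m i

/-- Dominance order: every partial sum of `l` is at most that of `m`. -/
def Dom (l m : Multiset ℕ) : Prop := ∀ k, psum l k ≤ psum m k

/-- Strict dominance. -/
def StrictDom (l m : Multiset ℕ) : Prop := Dom l m ∧ l ≠ m

/-- Componentwise sum of two partitions (sorted part sequences added, zero padding). -/
def psAdd (l m : Multiset ℕ) : Multiset ℕ :=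
  ((Multiset.range (Multiset.card l + Multiset.card m)).map
    (fun i => part l i + part m i)).filter (0 < ·)

/-- The transpose (conjugate) partition: the `j`-th column length `#{x ∈ m : x ≥ j+1}`. -/
def transpose (m : Multiset ℕ) : Multiset ℕ :=
  ((Multiset.range m.sum).map
    (fun j => Multiset.card (m.filter (fun x => j + 1 ≤ x)))).filter (0 < ·)

/-- The partition `s(m; z) = (z^a, b)` where `m = a z + b`, `0 ≤ b < z`. -/
def sPart (m z : ℕ) : Multiset ℕ :=
  Multiset.replicate (m / z) z + (if m % z = 0 then 0 else {m % z})

/-- `d_com^{(z)}(p) = Σ_i s(p_i; z)` (componentwise partition sum). -/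
def dcom (z : ℕ) (p : Multiset ℕ) : Multiset ℕ :=
  (parts p).foldr (fun x acc => psAdd (sPart x z) acc) 0

/-- A multiset is a partition when all its parts are positive. -/
def IsPartition (m : Multiset ℕ) : Prop := ∀ x ∈ m, 0 < x

/- ---------------- auxiliary lemmas ---------------- -/

lemma parts_coe (l : List ℕ) (h : l.Pairwise (· ≥ ·)) : parts (↑l) = l := by
  have hs : Multiset.sort (↑l : Multiset ℕ) (· ≤ ·) = l.reverse :=
    List.Perm.eq_of_pairwise' (r := (· ≤ ·))
      (Multiset.pairwise_sort _ _)
      (by rw [List.pairwise_reverse]; exact h)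
      ((Multiset.coe_eq_coe.mp (Multiset.sort_eq _ _)).trans l.reverse_perm.symm)
  simp [parts, hs]

lemma getD_anti {l : List ℕ} (h : l.Pairwise (· ≥ ·)) {i j : ℕ} (hij : i ≤ j) :
    l.getD j 0 ≤ l.getD i 0 := by
  by_cases hj : j < l.length
  · have hi : i < l.length := lt_of_le_of_lt hij hj
    rw [List.getD_eq_getElem _ _ hj, List.getD_eq_getElem _ _ hi]
    exact h.rel_get_of_le (a := ⟨i, hi⟩) (b := ⟨j, hj⟩) hij
  · rw [List.getD_eq_default _ _ (le_of_not_gt hj)]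
    exact Nat.zero_le _

lemma getD_filter {l : List ℕ} (h : l.Pairwise (· ≥ ·)) (i : ℕ) :
    (l.filter (fun x => decide (0 < x))).getD i 0 = l.getD i 0 := by
  induction l generalizing i with
  | nil => simp
  | cons a t ih =>
    have ht : t.Pairwise (· ≥ ·) := h.of_cons
    by_cases ha : 0 < a
    · cases i with
      | zero => simp [List.filter_cons, ha]
      | succ k => simpa [List.filter_cons, ha, List.getD_eq_getElem?_getD] using ih ht k
    · have hall : ∀ x ∈ a :: t, x = 0 := by
        intro x hx
        rcases List.mem_cons.mp hx with rfl | hx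
        · omega
        · have := List.rel_of_pairwise_cons h hx
          omega
      have h1 : (a :: t).filter (fun x => decide (0 < x)) = [] := by
        rw [List.filter_eq_nil_iff]
        intro x hx
        simp [hall x hx]
      rw [h1]
      by_cases hlen : i < (a :: t).length
      · rw [List.getD_eq_getElem _ _ hlen]
        simp [hall _ (List.getElem_mem hlen)]
      · rw [List.getD_eq_default _ _ (le_of_not_gt hlen)]
        simp

lemma part_mk (f : ℕ → ℕ) (hf : ∀ a b, a ≤ b → f b ≤ f a) (n i : ℕ) :
    part (((Multiset.range n).map f).filter (0 < ·)) i = if i < n then f i else 0 := by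
  rw [← Multiset.coe_range, Multiset.map_coe, Multiset.filter_coe]
  have hs : ((List.range n).map f).Pairwise (· ≥ ·) := by
    rw [List.pairwise_map]
    exact List.Pairwise.imp (fun hab => hf _ _ (le_of_lt hab)) (List.pairwise_lt_range (n := n))
  have hs2 : (((List.range n).map f).filter (fun x => decide (0 < x))).Pairwise (· ≥ ·) :=
    List.Pairwise.filter _ hs
  rw [part, parts_coe _ hs2, getD_filter hs]
  by_cases hi : i < n
  · have hlen : i < ((List.range n).map f).length := by simpa using hi
    rw [List.getD_eq_getElem _ _ hlen]
    simp [hi]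
  · rw [List.getD_eq_default _ _ (by simpa using le_of_not_gt hi)]
    simp [hi]

lemma parts_sorted (m : Multiset ℕ) : (parts m).Pairwise (· ≥ ·) := by
  rw [parts, List.pairwise_reverse]
  exact Multiset.pairwise_sort m (· ≤ ·)

lemma length_parts (m : Multiset ℕ) : (parts m).length = Multiset.card m := by
  simp [parts]

lemma part_eq_zero {m : Multiset ℕ} {i : ℕ} (h : Multiset.card m ≤ i) : part m i = 0 :=
  List.getD_eq_default _ _ (by rw [length_parts]; exact h)

lemma part_anti (m : Multiset ℕ) {i j : ℕ} (hij : i ≤ j) : part m j ≤ part m i :=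
  getD_anti (parts_sorted m) hij

lemma part_psAdd (l m : Multiset ℕ) (i : ℕ) :
    part (psAdd l m) i = part l i + part m i := by
  rw [psAdd, part_mk _ (fun a b hab => Nat.add_le_add (part_anti l hab) (part_anti m hab))]
  split
  · rfl
  · next h =>
    push_neg at h
    rw [part_eq_zero (by omega), part_eq_zero (by omega)]

lemma getD_rep_append (a z : ℕ) (t : List ℕ) (i : ℕ) :
    (List.replicate a z ++ t).getD i 0 = if i < a then z else t.getD (i - a) 0 := by
  induction a generalizing i with
  | zero => simp
  | succ n ih =>
    cases i with
    | zero => simp [List.replicate_succ]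
    | succ k => simpa [List.replicate_succ, List.getD_eq_getElem?_getD, Nat.succ_lt_succ_iff] using ih k

lemma part_sPart {z : ℕ} (hz : 1 ≤ z) (x i : ℕ) :
    part (sPart x z) i = min x (z * (i + 1)) - min x (z * i) := by
  have hb : x % z < z := Nat.mod_lt _ hz
  have hx : z * (x / z) + x % z = x := Nat.div_add_mod x z
  have hmul : z * (i + 1) = z * i + z := by ring
  have hlist : parts (sPart x z)
      = List.replicate (x / z) z ++ (if x % z = 0 then [] else [x % z]) := by
    have hco : sPart x z
        = ↑(List.replicate (x / z) z ++ (if x % z = 0 then [] else [x % z])) := by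
      rw [sPart]
      split
      · simp [Multiset.coe_replicate]
      · rw [← Multiset.coe_replicate, ← Multiset.coe_singleton, Multiset.coe_add]
    rw [hco]
    apply parts_coe
    rw [List.pairwise_append]
    refine ⟨List.pairwise_replicate.mpr (Or.inr le_rfl), ?_, ?_⟩
    · split <;> simp
    · intro u hu v hv
      have hu' : u = z := List.eq_of_mem_replicate hu
      have hv' : v = x % z := by
        split at hv
        · simp at hv
        · simpa using hv
      subst hu'; subst hv'
      omega
  rw [part, hlist, getD_rep_append]
  by_cases hia : i < x / z
  · have h1 : z * (i + 1) ≤ z * (x / z) := Nat.mul_le_mul_left z hia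
    simp only [hia, if_true]
    omega
  · simp only [hia, if_false]
    have h2 : z * (x / z) ≤ z * i := Nat.mul_le_mul_left z (le_of_not_gt hia)
    by_cases hb0 : x % z = 0
    · simp only [hb0, if_true]
      simp only [List.getD_nil]
      omega
    · simp only [hb0, if_false]
      by_cases hie : i = x / z
      · subst hie
        simp only [Nat.sub_self]
        simp only [List.getD_cons_zero]
        omega
      · have hgt : x / z < i := lt_of_le_of_ne (le_of_not_gt hia) (Ne.symm hie)
        have h3 : z * (x / z + 1) ≤ z * i := Nat.mul_le_mul_left z hgt
        rw [List.getD_eq_default _ _ (by simp; omega)]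
        have hmul2 : z * (x / z + 1) = z * (x / z) + z := by ring
        omega

lemma part_transpose (p : Multiset ℕ) (j : ℕ) :
    part (transpose p) j = Multiset.card (p.filter (fun x => j + 1 ≤ x)) := by
  rw [transpose, part_mk]
  · split
    · rfl
    · next h =>
      symm
      rw [Multiset.card_eq_zero, Multiset.filter_eq_nil]
      intro x hx hjx
      have hxs : x ≤ p.sum := Multiset.le_sum_of_mem hx
      omega
  · intro a b hab
    exact Multiset.card_le_card
      (Multiset.monotone_filter_right p (fun x hx => le_trans (by omega) hx))

lemma part_zero (i : ℕ) : part (0 : Multiset ℕ) i = 0 := by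
  simp [part, parts]

lemma part_dcom (z : ℕ) (p : Multiset ℕ) (i : ℕ) :
    part (dcom z p) i = ((parts p).map (fun x => part (sPart x z) i)).sum := by
  rw [dcom]
  induction parts p with
  | nil => simp [part_zero]
  | cons x t ih => simp [part_psAdd, ih]

lemma sum_helper (p : Multiset ℕ) (A B : ℕ) :
    (p.map (fun x => min x B - min x A)).sum
      = ∑ j ∈ Finset.Ico A B, Multiset.card (p.filter (fun x => j + 1 ≤ x)) := by
  induction p using Multiset.induction with
  | empty => simp
  | cons x s ih =>
    simp only [Multiset.map_cons, Multiset.sum_cons, Multiset.filter_cons, Multiset.card_add, ih]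
    rw [Finset.sum_add_distrib]
    have h1 : ∀ j : ℕ, Multiset.card (if j + 1 ≤ x then ({x} : Multiset ℕ) else 0)
        = if j + 1 ≤ x then 1 else 0 := by
      intro j; split <;> simp
    simp only [h1]
    have h2 : (Finset.Ico A B).filter (fun j => j + 1 ≤ x) = Finset.Ico A (min B x) := by
      ext j
      simp only [Finset.mem_filter, Finset.mem_Ico, lt_min_iff]
      omega
    have h3 : ∑ j ∈ Finset.Ico A B, (if j + 1 ≤ x then 1 else 0) = min B x - A := by
      rw [← Finset.sum_filter, h2]
      simp [Nat.card_Ico]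
    rw [h3]
    omega

/-- the `i`-th part (0-indexed) of `d_com^{(z)}(p)` is the number of boxes of
`p` lying in columns `z·i+1, ..., z·(i+1)`. -/
theorem stmt2 (z : ℕ) (hz : 1 ≤ z) (p : Multiset ℕ) (hp : IsPartition p) (i : ℕ) :
    part (dcom z p) i = ∑ j ∈ Finset.Ico (z * i) (z * (i + 1)), part (transpose p) j := by
  rw [part_dcom]
  have hcoe : (↑(parts p) : Multiset ℕ) = p := by
    rw [parts, Multiset.coe_reverse, Multiset.sort_eq]
  have h1 : ((parts p).map (fun x => part (sPart x z) i)).sum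
      = (p.map (fun x => min x (z * (i + 1)) - min x (z * i))).sum := by
    simp only [part_sPart hz]
    conv_rhs => rw [← hcoe]
    rw [Multiset.map_coe, Multiset.sum_coe]
  rw [h1, sum_helper]
  exact Finset.sum_congr rfl (fun j _ => (part_transpose p j).symm)

end PartStmt
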